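/- arXiv:2502.12071 — 5 statements merged into one kernel-verified Lean document; each statement's English description precedes it below -/
import Mathlib

section
/- Let X be a real topological vector space with topological dual X*, let Ω be a nonempty convex subset of X, and let F : Ω ⇉ X* be a set-valued map. Let L = {u + λv : λ ∈ ℝ} ⊆ X* be a straight line (u ∈ X*, v ∈ X* \ {0}) that is not orthogonal to Ω, and assume that for every ω ∈ L the translated map F + ω is quasimonotone on Ω. Then for every line segment [x,y] ⊆ Ω that is not orthogonal to L (i.e. ⟨v, x − y⟩ ≠ 0), the restriction of F to [x,y] is monotone; that is, for all points p, q ∈ [x,y] and all p* ∈ F(p), q* ∈ F(q), one has ⟨p* − q*, p − q⟩ ≥ 0. -/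
/-- If `F : Ω ⇉ X*` is a set-valued map on a nonempty convex subset `Ω`
of a real topological vector space `X`, and `L = {u + λ•v}` is a straight line in `X*`
(with `v ≠ 0`) not orthogonal to `Ω` such that `F + ω` is quasimonotone on `Ω` for every
`ω ∈ L`, then the restriction of `F` to any segment `[x,y] ⊆ Ω` with `v (x - y) ≠ 0`
(i.e. not orthogonal to `L`) is monotone. -/
theorem quasimonotone_translations_imp_monotone_on_segments
    {X : Type*} [AddCommGroup X] [Module ℝ X] [TopologicalSpace X]
    (Ω : Set X) (hΩne : Ω.Nonempty) (hΩconv : Convex ℝ Ω)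
    (F : X → Set (X →L[ℝ] ℝ))
    (u v : X →L[ℝ] ℝ) (hv : v ≠ 0)
    (hnotorth : ∃ a ∈ Ω, ∃ b ∈ Ω, v a ≠ v b)
    (hquasi : ∀ ω : X →L[ℝ] ℝ, (∃ l : ℝ, ω = u + l • v) →
      ∀ x ∈ Ω, ∀ y ∈ Ω, ∀ xs ∈ F x, ∀ ys ∈ F y,
        (ys + ω) (x - y) > 0 → (xs + ω) (x - y) ≥ 0) :
    ∀ x ∈ Ω, ∀ y ∈ Ω, v (x - y) ≠ 0 →
      ∀ p ∈ segment ℝ x y, ∀ q ∈ segment ℝ x y,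
        ∀ ps ∈ F p, ∀ qs ∈ F q, (ps - qs) (p - q) ≥ 0 := by
  intro x hx y hy hvxy p hp q hq ps hps qs hqs
  have hpΩ : p ∈ Ω := hΩconv.segment_subset hx hy hp
  have hqΩ : q ∈ Ω := hΩconv.segment_subset hx hy hq
  obtain ⟨a, b, ha, hb, hab, rfl⟩ := hp
  obtain ⟨c, d, hc, hd, hcd, rfl⟩ := hq
  have hdiff : (a • x + b • y) - (c • x + d • y) = (a - c) • (x - y) := by
    have hb' : b = 1 - a := by linarith
    have hd' : d = 1 - c := by linarith
    subst hb' hd'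
    module
  rw [hdiff]
  by_cases hac : a = c
  · simp [hac]
  · set e := (a - c) • (x - y) with he
    have hve : v e ≠ 0 := by
      rw [he, map_smul]
      exact mul_ne_zero (sub_ne_zero.mpr hac) hvxy
    by_contra hlt
    push_neg at hlt
    rw [ContinuousLinearMap.sub_apply] at hlt
    replace hlt : ps e < qs e := by linarith
    set m : ℝ := (ps e + qs e) / 2
    set l : ℝ := (-m - u e) / (v e)
    have hlv : l * v e = -m - u e := div_mul_cancel₀ _ hve
    have hkey := hquasi (u + l • v) ⟨l, rfl⟩ _ hpΩ _ hqΩ ps hps qs hqs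
    rw [hdiff] at hkey
    simp only [ContinuousLinearMap.add_apply, ContinuousLinearMap.smul_apply,
      smul_eq_mul] at hkey
    rw [hlv] at hkey
    have h1 : qs e + (u e + (-m - u e)) > 0 := by
      have : m < qs e := by simp only [m]; linarith
      linarith
    have h2 := hkey h1
    have : ps e < m := by simp only [m]; linarith
    linarith
end

section
/- Let X be a real topological vector space with topological dual X*, let Ω be a nonempty closed convex subset of X, let L = {u + λv : λ ∈ ℝ} ⊆ X* be a straight line that is not orthogonal to Ω, and let F : Ω → X* be a continuous (single-valued) map. Assume that F is monotone on every line segment [x,y] ⊆ Ω with ⟨v, x − y⟩ ≠ 0 (i.e. on every segment of Ω not orthogonal to L). Then F is monotone on all of Ω. -/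
/-!
Pairs with `v x ≠ v y` are endpoints of a transversal segment. If `v x = v y`, pick `c ∈ Ω`
with `v c ≠ v y` and, for small `β > 0`, put `z = x/2 + (1/2 - β) y + β c` and `T = (x + c)/2`.
The pairs `(z, y)`, `(x, z)` and `(T, z)` are all transversal to the level sets of `v`. The first
two monotonicity inequalities add up to
`F y (x - y) ≤ F x (x - y) + β (2 F z (c - y) - F x (c - y) - F y (c - y))`, and the third one,
since `T - z` is a positive multiple of `c - y`, bounds `F z (c - y)` by `F T (c - y)` uniformly
in `β`. Letting `β → 0` gives the monotonicity inequality for `x` and `y`.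
-/

open Filter Topology

section TransversalMonotone

variable {E 𝓕 𝓖 : Type*} [AddCommGroup E] [Module ℝ E]
  [FunLike 𝓕 E ℝ] [LinearMapClass 𝓕 ℝ E ℝ] [FunLike 𝓖 E ℝ] [LinearMapClass 𝓖 ℝ E ℝ]
  {Ω : Set E} {F : E → 𝓕} {v : 𝓖}

theorem Convex.apply_sub_le_add_mul_of_apply_eq (hΩ : Convex ℝ Ω)
    (hF : ∀ p ∈ Ω, ∀ q ∈ Ω, v p ≠ v q → F q (p - q) ≤ F p (p - q))
    {x y c : E} (hx : x ∈ Ω) (hy : y ∈ Ω) (hc : c ∈ Ω) (hxy : v x = v y) (hcy : v c ≠ v y)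
    {β : ℝ} (hβ : β ∈ Set.Ioo (0 : ℝ) (1 / 2)) :
    F y (x - y) ≤ F x (x - y) +
      β * (2 * (2 * F (midpoint ℝ x c) (c - y) - F x (c - y) - F y (c - y))) := by
  obtain ⟨hβ0, hβ2⟩ := hβ
  set T := midpoint ℝ x c
  set z := (1 / 2 : ℝ) • x + (1 / 2 - β) • y + β • c
  have hT : T ∈ Ω := hΩ.midpoint_mem hx hc
  have hz : z ∈ Ω := by
    have hz' : (1 - 2 * β) • midpoint ℝ x y + (2 * β) • T = z := by
      simp only [T, z, midpoint_eq_smul_add, invOf_eq_inv]; module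
    exact hz' ▸ hΩ (hΩ.midpoint_mem hx hy) hT (by linarith) (by linarith) (by ring)
  have hzy : z - y = (1 / 2 : ℝ) • (x - y) + β • (c - y) := by module
  have hxz : x - z = (1 / 2 : ℝ) • (x - y) + (-β) • (c - y) := by module
  have hTz : T - z = (1 / 2 - β) • (c - y) := by
    simp only [T, z, midpoint_eq_smul_add, invOf_eq_inv]; module
  have hvcy : v (c - y) ≠ 0 := by rwa [map_sub, sub_ne_zero]
  have hvxy : v (x - y) = 0 := by rw [map_sub, hxy, sub_self]
  have mono_zy := hF z hz y hy <| by
    rw [← sub_ne_zero, ← map_sub, hzy, map_add, map_smul, map_smul, hvxy]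
    simpa using mul_ne_zero hβ0.ne' hvcy
  have mono_xz := hF x hx z hz <| by
    rw [← sub_ne_zero, ← map_sub, hxz, map_add, map_smul, map_smul, hvxy]
    simpa using mul_ne_zero hβ0.ne' hvcy
  have mono_Tz := hF T hT z hz <| by
    rw [← sub_ne_zero, ← map_sub, hTz, map_smul]
    exact smul_ne_zero (by linarith) hvcy
  rw [hzy, map_add, map_add, map_smul, map_smul, map_smul, map_smul] at mono_zy
  rw [hxz, map_add, map_add, map_smul, map_smul, map_smul, map_smul] at mono_xz
  rw [hTz, map_smul, map_smul] at mono_Tz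
  simp only [smul_eq_mul] at mono_zy mono_xz mono_Tz
  have hFz : F z (c - y) ≤ F T (c - y) := le_of_mul_le_mul_left mono_Tz (by linarith)
  linarith [mul_le_mul_of_nonneg_left hFz hβ0.le]

theorem Convex.apply_sub_le_of_forall_apply_ne (hΩ : Convex ℝ Ω)
    (hsep : ∃ a ∈ Ω, ∃ b ∈ Ω, v a ≠ v b)
    (hF : ∀ p ∈ Ω, ∀ q ∈ Ω, v p ≠ v q → F q (p - q) ≤ F p (p - q))
    {x y : E} (hx : x ∈ Ω) (hy : y ∈ Ω) : F y (x - y) ≤ F x (x - y) := by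
  by_cases hxy : v x = v y
  swap
  · exact hF x hx y hy hxy
  obtain ⟨c, hc, hcy⟩ : ∃ c ∈ Ω, v c ≠ v y := by
    obtain ⟨a, ha, b, hb, hab⟩ := hsep
    by_cases hay : v a = v y
    · exact ⟨b, hb, fun hby => hab (hay.trans hby.symm)⟩
    · exact ⟨a, ha, hay⟩
  set C := 2 * (2 * F (midpoint ℝ x c) (c - y) - F x (c - y) - F y (c - y))
  have hlim : Tendsto (fun β : ℝ => F x (x - y) + β * C) (𝓝[>] 0) (𝓝 (F x (x - y))) :=
    ((continuous_const.add (continuous_id.mul continuous_const)).tendsto' 0 _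
      (by simp)).mono_left nhdsWithin_le_nhds
  refine ge_of_tendsto hlim ?_
  filter_upwards [Ioo_mem_nhdsGT (by norm_num : (0 : ℝ) < 1 / 2)] with β hβ
  exact hΩ.apply_sub_le_add_mul_of_apply_eq hF hx hy hc hxy hcy hβ

end TransversalMonotone

theorem monotone_on_segments_imp_monotone_general
    {X : Type*} [AddCommGroup X] [Module ℝ X] [TopologicalSpace X]
    (Ω : Set X) (hΩconv : Convex ℝ Ω)
    (v : WeakDual ℝ X)
    (hnotorth : ∃ a ∈ Ω, ∃ b ∈ Ω, v a ≠ v b)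
    (F : X → WeakDual ℝ X)
    (hseg : ∀ x ∈ Ω, ∀ y ∈ Ω, v (x - y) ≠ 0 →
      ∀ p ∈ segment ℝ x y, ∀ q ∈ segment ℝ x y, (F p - F q) (p - q) ≥ 0) :
    ∀ x ∈ Ω, ∀ y ∈ Ω, (F x - F y) (x - y) ≥ 0 := by
  have hF : ∀ p ∈ Ω, ∀ q ∈ Ω, v p ≠ v q → F q (p - q) ≤ F p (p - q) := by
    intro p hp q hq hpq
    have hvpq : v (p - q) ≠ 0 := by rwa [map_sub, sub_ne_zero]
    exact sub_nonneg.mp <|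
      hseg p hp q hq hvpq p (left_mem_segment ℝ p q) q (right_mem_segment ℝ p q)
  intro x hx y hy
  exact sub_nonneg.mpr (hΩconv.apply_sub_le_of_forall_apply_ne hnotorth hF hx hy)

/-- Let `Ω` be a nonempty closed convex subset of a real topological
vector space `X`, let `L = {u + λ•v}` (with `v ≠ 0`) be a straight line in `X*` not
orthogonal to `Ω`, and let `F : Ω → X*` be continuous (into the weak-* dual). If `F`
is monotone on every segment `[x,y] ⊆ Ω` with `v (x - y) ≠ 0`, then `F` is monotone
on all of `Ω`. -/
theorem monotone_on_segments_imp_monotone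
    {X : Type*} [AddCommGroup X] [Module ℝ X] [TopologicalSpace X]
    (Ω : Set X) (hΩne : Ω.Nonempty) (hΩclosed : IsClosed Ω) (hΩconv : Convex ℝ Ω)
    (u v : WeakDual ℝ X) (hv : v ≠ 0)
    (hnotorth : ∃ a ∈ Ω, ∃ b ∈ Ω, v a ≠ v b)
    (F : X → WeakDual ℝ X) (hFcont : ContinuousOn F Ω)
    (hseg : ∀ x ∈ Ω, ∀ y ∈ Ω, v (x - y) ≠ 0 →
      ∀ p ∈ segment ℝ x y, ∀ q ∈ segment ℝ x y, (F p - F q) (p - q) ≥ 0) :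
    ∀ x ∈ Ω, ∀ y ∈ Ω, (F x - F y) (x - y) ≥ 0 :=
  monotone_on_segments_imp_monotone_general Ω hΩconv v hnotorth F hseg
end

section
/- Let E be a real inner product space, let Ω ⊆ E be a nonempty open convex set, and let F : E → E be continuous on Ω and (Fréchet) differentiable at every point of Ω. Let L = {u + λv : λ ∈ ℝ} ⊆ E be a straight line (u ∈ E, v ∈ E \ {0}) that is not orthogonal to Ω. Then the following are equivalent: (a) for every ω ∈ L, the translated map x ↦ F(x) + ω is quasimonotone on Ω; (b) for every x ∈ Ω, the derivative DF(x) is positive semidefinite, i.e. ⟨w, (DF(x))(w)⟩ ≥ 0 for all w ∈ E. -/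
/-!
A positive semidefinite derivative on a convex set makes `F` monotone,
`⟪F x - F y, x - y⟫ ≥ 0`, by integrating along segments, and every translate of a monotone
map is quasimonotone. Conversely, if `⟪F x - F y, x - y⟫ < 0` and `⟪v, x - y⟫ ≠ 0`, the point
`ω ∈ L` with `⟪ω, x - y⟫ = -(⟪F x, x - y⟫ + ⟪F y, x - y⟫) / 2` makes `F + ω` fail
quasimonotonicity at `(x, y)`. So `F` is monotone along every direction `w` with `⟪v, w⟫ ≠ 0`,
whence `⟪w, DF(x) w⟫ ≥ 0` for those `w`; they are dense, and the quadratic form is continuous.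
-/

open Filter Topology

open scoped RealInnerProductSpace

section

variable {E : Type*} [NormedAddCommGroup E] [InnerProductSpace ℝ E]

def QuasimonotoneOn (G : E → E) (Ω : Set E) : Prop :=
  ∀ x ∈ Ω, ∀ y ∈ Ω, 0 < ⟪G y, x - y⟫ → 0 ≤ ⟪G x, x - y⟫

theorem inner_sub_sub_nonneg_of_fderiv_posSemidef {Ω : Set E} (hΩ : Convex ℝ Ω) {F : E → E}
    {f : E → E →L[ℝ] E} (hF : ∀ x ∈ Ω, HasFDerivAt F (f x) x)
    (hpsd : ∀ x ∈ Ω, ∀ w, 0 ≤ ⟪w, f x w⟫) {x y : E} (hx : x ∈ Ω) (hy : y ∈ Ω) :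
    0 ≤ ⟪F x - F y, x - y⟫ := by
  set g : ℝ → ℝ := fun s => ⟪F (y + s • (x - y)), x - y⟫
  have hmem : ∀ s ∈ Set.Icc (0 : ℝ) 1, y + s • (x - y) ∈ Ω := fun s hs =>
    hΩ.add_smul_sub_mem hy hx hs
  have hg : ∀ s ∈ Set.Icc (0 : ℝ) 1, HasDerivAt g ⟪f (y + s • (x - y)) (x - y), x - y⟫ s := by
    intro s hs
    have hline : HasDerivAt (fun s : ℝ => y + s • (x - y)) (x - y) s := by
      simpa using ((hasDerivAt_id s).smul_const (x - y)).const_add y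
    exact ((hF _ (hmem s hs)).comp_hasDerivAt s hline).inner ℝ (hasDerivAt_const s (x - y))
      |>.congr_deriv (by simp)
  have hmono : MonotoneOn g (Set.Icc 0 1) := by
    refine monotoneOn_of_hasDerivWithinAt_nonneg (convex_Icc 0 1)
      (fun s hs => (hg s hs).continuousAt.continuousWithinAt)
      (fun s hs => (hg s (interior_subset hs)).hasDerivWithinAt) fun s hs => ?_
    rw [real_inner_comm]
    exact hpsd _ (hmem s (interior_subset hs)) _
  simpa [g, inner_sub_left] using hmono (by simp) (by simp) zero_le_one

theorem inner_sub_sub_nonneg_of_quasimonotoneOn_add_line {Ω : Set E} {F : E → E} {u v : E}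
    (hqm : ∀ l : ℝ, QuasimonotoneOn (fun z => F z + (u + l • v)) Ω) {x y : E}
    (hx : x ∈ Ω) (hy : y ∈ Ω) (hxy : ⟪v, x - y⟫ ≠ 0) :
    0 ≤ ⟪F x - F y, x - y⟫ := by
  by_contra! hneg
  set A := ⟪F x, x - y⟫
  set B := ⟪F y, x - y⟫
  set l := (-(A + B) / 2 - ⟪u, x - y⟫) / ⟪v, x - y⟫
  have hω : ⟪u + l • v, x - y⟫ = -(A + B) / 2 := by
    rw [inner_add_left, real_inner_smul_left, div_mul_cancel₀ _ hxy]
    ring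
  rw [inner_sub_left] at hneg
  have hle := hqm l x hx y hy (by rw [inner_add_left, hω]; linarith)
  rw [inner_add_left, hω] at hle
  linarith

theorem inner_apply_self_nonneg_of_eventually_inner_nonneg {F : E → E} {A : E →L[ℝ] E}
    {x w : E} (hF : HasFDerivAt F A x)
    (h : ∀ᶠ t in 𝓝[>] (0 : ℝ), 0 ≤ ⟪F (x + t • w) - F x, t • w⟫) : 0 ≤ ⟪w, A w⟫ := by
  set g : ℝ → ℝ := fun t => ⟪F (x + t • w), w⟫
  have hline : HasDerivAt (fun t : ℝ => x + t • w) w 0 := by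
    simpa using ((hasDerivAt_id (0 : ℝ)).smul_const w).const_add x
  have hg : HasDerivWithinAt g ⟪A w, w⟫ (Set.Ioi 0) 0 :=
    ((hF.comp_hasDerivAt_of_eq 0 hline (by simp)).inner ℝ
      (hasDerivAt_const 0 w)).hasDerivWithinAt.congr_deriv (by simp)
  have hslope := (hasDerivWithinAt_iff_tendsto_slope' (by simp)).mp hg
  rw [real_inner_comm]
  refine ge_of_tendsto hslope ?_
  filter_upwards [h, self_mem_nhdsWithin] with t ht htpos
  rw [inner_smul_right, inner_sub_left] at ht
  simpa [slope_def_field, g] using div_nonneg (nonneg_of_mul_nonneg_right ht htpos)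
    htpos.le

theorem ContinuousLinearMap.inner_map_self_nonneg_of_inner_ne_zero (A : E →L[ℝ] E) {v : E}
    (hv : v ≠ 0) (h : ∀ w, ⟪v, w⟫ ≠ 0 → 0 ≤ ⟪w, A w⟫) (w : E) : 0 ≤ ⟪w, A w⟫ := by
  by_cases hvw : ⟪v, w⟫ = 0
  · have hcont : Continuous fun t : ℝ => ⟪w + t • v, A (w + t • v)⟫ := by fun_prop
    have hnonneg : ∀ᶠ t in 𝓝[≠] (0 : ℝ), 0 ≤ ⟪w + t • v, A (w + t • v)⟫ := by
      filter_upwards [self_mem_nhdsWithin] with t ht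
      exact h _ (by simpa [inner_add_right, real_inner_smul_right, hvw] using ⟨ht, hv⟩)
    simpa using ge_of_tendsto (hcont.tendsto 0 |>.mono_left nhdsWithin_le_nhds) hnonneg
  · exact h w hvw

end

theorem quasimonotone_translations_iff_fderiv_posSemidef_general
    {E : Type*} [NormedAddCommGroup E] [InnerProductSpace ℝ E]
    (Ω : Set E) (hΩopen : IsOpen Ω) (hΩconv : Convex ℝ Ω)
    (F : E → E)
    (f : E → E →L[ℝ] E) (hdiff : ∀ x ∈ Ω, HasFDerivAt F (f x) x)
    (u v : E) (hv : v ≠ 0) :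
    (∀ ω : E, (∃ l : ℝ, ω = u + l • v) →
        ∀ x ∈ Ω, ∀ y ∈ Ω, ⟪F y + ω, x - y⟫ > 0 → ⟪F x + ω, x - y⟫ ≥ 0)
      ↔ (∀ x ∈ Ω, ∀ w : E, ⟪w, f x w⟫ ≥ 0) := by
  constructor
  · intro hqm x hx
    refine (f x).inner_map_self_nonneg_of_inner_ne_zero hv fun w hvw => ?_
    refine inner_apply_self_nonneg_of_eventually_inner_nonneg (hdiff x hx) ?_
    have hray : ∀ᶠ t in 𝓝[>] (0 : ℝ), x + t • w ∈ Ω :=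
      eventually_nhdsWithin_of_eventually_nhds <|
        (Continuous.tendsto' (by fun_prop) 0 x (by simp)).eventually (hΩopen.mem_nhds hx)
    filter_upwards [hray, self_mem_nhdsWithin] with t hxt ht
    simpa using inner_sub_sub_nonneg_of_quasimonotoneOn_add_line (fun l => hqm _ ⟨l, rfl⟩)
      hxt hx (by simpa [real_inner_smul_right] using ⟨ht.ne', hvw⟩)
  · rintro hpsd ω ⟨l, rfl⟩ x hx y hy hpos
    have hmono := inner_sub_sub_nonneg_of_fderiv_posSemidef hΩconv hdiff hpsd hx hy
    rw [inner_sub_left] at hmono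
    rw [inner_add_left] at hpos ⊢
    linarith

/-- Let `Ω` be a nonempty open convex subset of a real inner product
space `E`, let `F : E → E` be continuous on `Ω` and Fréchet differentiable at every
point of `Ω` (with derivative `f x = DF(x)`), and let `L = {u + λ•v}` (with `v ≠ 0`)
be a straight line not orthogonal to `Ω`. Then `F + ω` is quasimonotone on `Ω` for
every `ω ∈ L` if and only if `DF(x)` is positive semidefinite for every `x ∈ Ω`. -/
theorem quasimonotone_translations_iff_fderiv_posSemidef
    {E : Type*} [NormedAddCommGroup E] [InnerProductSpace ℝ E]
    (Ω : Set E) (hΩne : Ω.Nonempty) (hΩopen : IsOpen Ω) (hΩconv : Convex ℝ Ω)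
    (F : E → E) (hFcont : ContinuousOn F Ω)
    (f : E → E →L[ℝ] E) (hdiff : ∀ x ∈ Ω, HasFDerivAt F (f x) x)
    (u v : E) (hv : v ≠ 0)
    (hnotorth : ∃ a ∈ Ω, ∃ b ∈ Ω, ⟪v, a⟫ ≠ ⟪v, b⟫) :
    (∀ ω : E, (∃ l : ℝ, ω = u + l • v) →
        ∀ x ∈ Ω, ∀ y ∈ Ω, ⟪F y + ω, x - y⟫ > 0 → ⟪F x + ω, x - y⟫ ≥ 0)
      ↔ (∀ x ∈ Ω, ∀ w : E, ⟪w, f x w⟫ ≥ 0) :=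
  quasimonotone_translations_iff_fderiv_posSemidef_general Ω hΩopen hΩconv F f hdiff u v hv
end

section
/- Let E be a real inner product space, let Ω ⊆ E be a nonempty open convex set, and let F : E → E be (Fréchet) differentiable at every point of Ω. Suppose there exists a straight line L = {u + λv : λ ∈ ℝ} ⊆ E that is not orthogonal to Ω such that for every ω ∈ L the translated map x ↦ F(x) + ω is pseudomonotone on Ω. Then for every x ∈ Ω the derivative DF(x) is positive semidefinite: ⟨w, (DF(x))(w)⟩ ≥ 0 for all w ∈ E. -/
/-!
Fix `x ∈ Ω` and a direction `w` with `⟪v, w⟫ ≠ 0`, and pick `ω ∈ L` with `⟪F x + ω, w⟫ = 0`.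
Pseudomonotonicity of `F + ω`, applied to the points `x + t • w` and `x`, makes
`t ↦ ⟪w, F (x + t • w) + ω⟫` nonnegative for small `t > 0`, while it vanishes at `t = 0`; hence its
derivative `⟪w, DF(x) w⟫` at `0` is nonnegative. Since `v ≠ 0`, such directions `w` are dense, and
the quadratic form `w ↦ ⟪w, DF(x) w⟫` is continuous.
-/

open scoped RealInnerProductSpace
open Filter Topology

theorem HasDerivAt.nonneg_of_eventually_le_right {φ : ℝ → ℝ} {d a : ℝ} (hφ : HasDerivAt φ d a)
    (h : ∀ᶠ t in 𝓝[>] 0, φ a ≤ φ (a + t)) : 0 ≤ d :=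
  ge_of_tendsto hφ.tendsto_slope_zero_right <| (h.and self_mem_nhdsWithin).mono
    fun _ ⟨ht, htpos⟩ ↦ smul_nonneg (inv_nonneg.2 (le_of_lt htpos)) (sub_nonneg.2 ht)

section InnerProductSpace

variable {E : Type*} [NormedAddCommGroup E] [InnerProductSpace ℝ E]

theorem dense_setOf_inner_ne_zero {v : E} (hv : v ≠ 0) : Dense {w : E | ⟪v, w⟫ ≠ 0} := by
  have hcompl : {w : E | ⟪v, w⟫ ≠ 0} = ((ℝ ∙ v)ᗮ : Set E)ᶜ := by
    ext w; simp [Submodule.mem_orthogonal_singleton_iff_inner_right]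
  rw [hcompl, ← interior_eq_empty_iff_dense_compl, ← Set.not_nonempty_iff_eq_empty]
  intro hint
  have hself : v ∈ (ℝ ∙ v)ᗮ := (Submodule.eq_top_of_nonempty_interior' _ hint).symm ▸ trivial
  exact hv (inner_self_eq_zero.1 (Submodule.mem_orthogonal_singleton_iff_inner_right.1 hself))

def PseudomonotoneOn (G : E → E) (Ω : Set E) : Prop :=
  ∀ x ∈ Ω, ∀ y ∈ Ω, 0 ≤ ⟪G y, x - y⟫ → 0 ≤ ⟪G x, x - y⟫

theorem PseudomonotoneOn.inner_self_fderiv_nonneg {G : E → E} {G' : E →L[ℝ] E} {Ω : Set E}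
    {x w : E} (hG : PseudomonotoneOn G Ω) (hΩ : IsOpen Ω) (hx : x ∈ Ω)
    (hG' : HasFDerivAt G G' x) (hw : ⟪G x, w⟫ = 0) : 0 ≤ ⟪w, G' w⟫ := by
  set φ : ℝ → ℝ := fun t ↦ ⟪w, G (x + t • w)⟫
  have hray : HasDerivAt (fun t : ℝ ↦ x + t • w) w 0 := by
    simpa using ((hasDerivAt_id (0 : ℝ)).smul_const w).const_add x
  have hφ : HasDerivAt φ ⟪w, G' w⟫ 0 :=
    (innerSL ℝ w).hasFDerivAt.comp_hasDerivAt 0 <|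
      (by simpa using hG' : HasFDerivAt G G' (x + (0 : ℝ) • w)).comp_hasDerivAt 0 hray
  refine hφ.nonneg_of_eventually_le_right ?_
  have hmem : ∀ᶠ t : ℝ in 𝓝 0, x + t • w ∈ Ω :=
    hray.continuousAt.eventually_mem (by simpa using hΩ.mem_nhds hx)
  filter_upwards [nhdsWithin_le_nhds hmem, self_mem_nhdsWithin] with t ht (htpos : 0 < t)
  have hmono := hG (x + t • w) ht x hx (by simp [inner_smul_right, hw])
  simp only [add_sub_cancel_left, inner_smul_right] at hmono
  have hφ0 : φ 0 = 0 := by simpa [φ, real_inner_comm] using hw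
  simpa [hφ0, φ, real_inner_comm] using nonneg_of_mul_nonneg_right hmono htpos

theorem exists_inner_add_smul_eq_zero (a : E) {v w : E} (hvw : ⟪v, w⟫ ≠ 0) :
    ∃ l : ℝ, ⟪a + l • v, w⟫ = 0 :=
  ⟨-⟪a, w⟫ / ⟪v, w⟫, by rw [inner_add_left, real_inner_smul_left]; field_simp; ring⟩

end InnerProductSpace

theorem fderiv_posSemidef_of_pseudomonotone_translations_general
    {E : Type*} [NormedAddCommGroup E] [InnerProductSpace ℝ E]
    (Ω : Set E) (hΩopen : IsOpen Ω)
    (F : E → E) (f : E → E →L[ℝ] E) (hdiff : ∀ x ∈ Ω, HasFDerivAt F (f x) x)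
    (hline : ∃ u v : E, v ≠ 0 ∧ (∃ a ∈ Ω, ∃ b ∈ Ω, ⟪v, a⟫ ≠ ⟪v, b⟫) ∧
      ∀ ω : E, (∃ l : ℝ, ω = u + l • v) →
        ∀ x ∈ Ω, ∀ y ∈ Ω, ⟪F y + ω, x - y⟫ ≥ 0 → ⟪F x + ω, x - y⟫ ≥ 0) :
    ∀ x ∈ Ω, ∀ w : E, ⟪w, f x w⟫ ≥ 0 := by
  obtain ⟨u, v, hv, -, hpm⟩ := hline
  intro x hx
  refine (dense_setOf_inner_ne_zero hv).induction (fun w (hvw : ⟪v, w⟫ ≠ 0) ↦ ?_)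
    (isClosed_le continuous_const (continuous_id.inner (f x).continuous))
  obtain ⟨l, hl⟩ := exists_inner_add_smul_eq_zero (F x + u) hvw
  have hpm_l : PseudomonotoneOn (fun y ↦ F y + (u + l • v)) Ω := hpm _ ⟨l, rfl⟩
  exact hpm_l.inner_self_fderiv_nonneg hΩopen hx ((hdiff x hx).add_const _)
    (by rwa [← add_assoc])

/-- Let `Ω` be a nonempty open convex subset of a real inner product
space `E` and `F : E → E` Fréchet differentiable at every point of `Ω` (with
derivative `f x = DF(x)`). If there exists a straight line `L = {u + λ•v}` (with
`v ≠ 0`) not orthogonal to `Ω` such that `F + ω` is pseudomonotone on `Ω` for every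
`ω ∈ L`, then `DF(x)` is positive semidefinite for every `x ∈ Ω`. -/
theorem fderiv_posSemidef_of_pseudomonotone_translations
    {E : Type*} [NormedAddCommGroup E] [InnerProductSpace ℝ E]
    (Ω : Set E) (hΩne : Ω.Nonempty) (hΩopen : IsOpen Ω) (hΩconv : Convex ℝ Ω)
    (F : E → E) (f : E → E →L[ℝ] E) (hdiff : ∀ x ∈ Ω, HasFDerivAt F (f x) x)
    (hline : ∃ u v : E, v ≠ 0 ∧ (∃ a ∈ Ω, ∃ b ∈ Ω, ⟪v, a⟫ ≠ ⟪v, b⟫) ∧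
      ∀ ω : E, (∃ l : ℝ, ω = u + l • v) →
        ∀ x ∈ Ω, ∀ y ∈ Ω, ⟪F y + ω, x - y⟫ ≥ 0 → ⟪F x + ω, x - y⟫ ≥ 0) :
    ∀ x ∈ Ω, ∀ w : E, ⟪w, f x w⟫ ≥ 0 :=
  fderiv_posSemidef_of_pseudomonotone_translations_general Ω hΩopen F f hdiff hline
end

section
/- Let X be a real topological vector space with topological dual X*, let Ω be a nonempty convex subset of X, and let F : Ω ⇉ X* be a set-valued map. Let L ⊆ X* be a straight line that is not orthogonal to Ω, let x, y ∈ Ω, and let z ∈ Ω. For α ∈ (0,1) set z_α = αz + (1−α)(x+y)/2. Suppose F is monotone on each of the segments [x, z_α], [y, z_α], and [(x+y)/2, z]. Then for all x* ∈ F(x), y* ∈ F(y), z* ∈ F(z) and z_α* ∈ F(z_α), the inequality 2α⟨z*, z − (x+y)/2⟩ ≥ ⟨x*, z_α − x⟩ + ⟨y*, z_α − y⟩ holds. -/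
/-- Let `Ω` be a nonempty convex subset of a real topological vector
space `X`, `F : Ω ⇉ X*` a set-valued map, and `L = {u + λ•v}` (with `v ≠ 0`) a straight
line in `X*` not orthogonal to `Ω`. Let `x, y, z ∈ Ω`, `α ∈ (0,1)` and
`z_α = α•z + (1-α)•(x+y)/2`. If `F` is monotone on each of the segments `[x, z_α]`,
`[y, z_α]` and `[(x+y)/2, z]`, then for all `x* ∈ F x`, `y* ∈ F y`, `z* ∈ F z` and
`z_α* ∈ F z_α`, one has `2α⟨z*, z - (x+y)/2⟩ ≥ ⟨x*, z_α - x⟩ + ⟨y*, z_α - y⟩`. -/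
theorem averaged_point_inequality
    {X : Type*} [AddCommGroup X] [Module ℝ X] [TopologicalSpace X]
    (Ω : Set X) (hΩne : Ω.Nonempty) (hΩconv : Convex ℝ Ω)
    (F : X → Set (X →L[ℝ] ℝ))
    (u v : X →L[ℝ] ℝ) (hv : v ≠ 0)
    (hnotorth : ∃ a ∈ Ω, ∃ b ∈ Ω, v a ≠ v b)
    (x y z : X) (hx : x ∈ Ω) (hy : y ∈ Ω) (hz : z ∈ Ω)
    (α : ℝ) (hα : α ∈ Set.Ioo (0 : ℝ) 1)
    (zα : X) (hzα : zα = α • z + (1 - α) • ((2 : ℝ)⁻¹ • (x + y)))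
    (hm₁ : ∀ p ∈ segment ℝ x zα, ∀ q ∈ segment ℝ x zα,
      ∀ ps ∈ F p, ∀ qs ∈ F q, (ps - qs) (p - q) ≥ 0)
    (hm₂ : ∀ p ∈ segment ℝ y zα, ∀ q ∈ segment ℝ y zα,
      ∀ ps ∈ F p, ∀ qs ∈ F q, (ps - qs) (p - q) ≥ 0)
    (hm₃ : ∀ p ∈ segment ℝ ((2 : ℝ)⁻¹ • (x + y)) z, ∀ q ∈ segment ℝ ((2 : ℝ)⁻¹ • (x + y)) z,
      ∀ ps ∈ F p, ∀ qs ∈ F q, (ps - qs) (p - q) ≥ 0) :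
    ∀ xs ∈ F x, ∀ ys ∈ F y, ∀ zs ∈ F z, ∀ zαs ∈ F zα,
      2 * α * zs (z - (2 : ℝ)⁻¹ • (x + y)) ≥ xs (zα - x) + ys (zα - y) := by
  intro xs hxs ys hys zs hzs zαs hzαs
  obtain ⟨hα0, hα1⟩ := hα
  have h1 := hm₁ x (left_mem_segment ℝ x zα) zα (right_mem_segment ℝ x zα) xs hxs zαs hzαs
  have h2 := hm₂ y (left_mem_segment ℝ y zα) zα (right_mem_segment ℝ y zα) ys hys zαs hzαs
  have hseg : zα ∈ segment ℝ ((2 : ℝ)⁻¹ • (x + y)) z :=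
    ⟨1 - α, α, by linarith, hα0.le, by ring, by rw [hzα]; module⟩
  have h3 := hm₃ z (right_mem_segment ℝ _ z) zα hseg zs hzs zαs hzαs
  -- rewrite everything in scalar form
  subst hzα
  simp only [ContinuousLinearMap.sub_apply, map_sub, map_add, map_smul, smul_eq_mul] at h1 h2 h3 ⊢
  -- h3 : (zs - zαs) (z - zα) ≥ 0, where z - zα = (1-α)•(z - m)
  nlinarith [mul_pos hα0 (sub_pos.2 hα1), mul_nonneg hα0.le h3,
    mul_nonneg (mul_nonneg hα0.le hα0.le) h3]
end
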